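/- Suppose there are real polynomials R_0,…,R_H and ER_1,…,ER_H in n variables such that for every 1 ≤ i ≤ H and every x ∈ ℝⁿ, R_{i−1} is κ(x)-integrable and ER_i(x) = ∫ R_{i−1}(y) κ(x)(dy); and suppose there exist constants γ ≥ 0, α_i ≥ 0 (0 ≤ i ≤ H), β_i ≥ 0 (1 ≤ i ≤ H), and finite families of SOS polynomials (L^i_{r,j})_j, (L^i_{u,j})_j, (L^i_{s̄,j})_j for each 0 ≤ i ≤ H and (L_{0,j})_j, such that the following polynomials are SOS: (i) R_i for all 0 ≤ i ≤ H; (ii) −R_i + (1 + α_i) − Σ_j L^i_{r,j} h_{r,j} for all 0 ≤ i ≤ H; (iii) −R_i + α_i − Σ_j L^i_{u,j} h_{u,j} for all 0 ≤ i ≤ H; (iv) −R_0 + α_0 − Σ_j L^0_{s̄,j} h_{s̄,j}; (v) −R_i + ER_i − α_{i−1} + α_i + β_i − Σ_j L^i_{s̄,j} h_{s̄,j} for all 1 ≤ i ≤ H; (vi) R_H − γ − Σ_j L_{0,j} h_{0,j}. Then the function R(x,i) := R_i(x) satisfies the time-varying certificate conditions, and consequently the value function satisfies V_H(x) ≥ γ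 − (α_H + Σ_{i=1}^{H} β_i) for every x ∈ X₀. -/

import Mathlib

open MeasureTheory ProbabilityTheory Finset

attribute [local instance] Classical.propDecidable

/-- The reach-avoid value function `V_k` defined by the dynamic-programming recursion:
`V_k(x) = 1` on `X_r`, `V_k(x) = 0` on `X_u = (X_s)ᶜ`, `V_0(x) = 0` on `X_s \\ X_r`, and
`V_k(x) = E[V_{k-1}(x') | x]` on `X_s \\ X_r` for `k ≥ 1` (assuming `X_r ⊆ X_s`). -/
noncomputable def reachAvoidValue {n : ℕ}
    (κ : Kernel (Fin n → ℝ) (Fin n → ℝ)) (Xs Xr : Set (Fin n → ℝ)) :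
    ℕ → (Fin n → ℝ) → ℝ
  | 0, x => if x ∈ Xr then 1 else 0
  | k + 1, x =>
      if x ∈ Xr then 1
      else if x ∈ Xs then ∫ y, reachAvoidValue κ Xs Xr k y ∂(κ x)
      else 0

/-- A real polynomial is a sum of squares (SOS) if it is a finite sum of squares
of real polynomials. -/
def IsSOS {n : ℕ} (p : MvPolynomial (Fin n) ℝ) : Prop :=
  ∃ (r : ℕ) (q : Fin r → MvPolynomial (Fin n) ℝ), p = ∑ j, (q j) ^ 2

lemma isSOS_eval_nonneg {n : ℕ} {p : MvPolynomial (Fin n) ℝ} (hp : IsSOS p)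
    (x : Fin n → ℝ) : 0 ≤ MvPolynomial.eval x p := by
  obtain ⟨r, q, rfl⟩ := hp
  rw [map_sum]
  exact Finset.sum_nonneg fun j _ => by rw [map_pow]; positivity

lemma reachAvoidValue_measurable {n : ℕ}
    (κ : Kernel (Fin n → ℝ) (Fin n → ℝ)) [IsMarkovKernel κ]
    (Xs Xr : Set (Fin n → ℝ)) (hXs : MeasurableSet Xs) (hXr : MeasurableSet Xr) :
    ∀ k, Measurable (reachAvoidValue κ Xs Xr k) := by
  intro k
  induction k with
  | zero => exact Measurable.ite hXr measurable_const measurable_const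
  | succ k ih =>
    have h1 : StronglyMeasurable fun x => ∫ y, reachAvoidValue κ Xs Xr k y ∂(κ x) := by
      have h2 : StronglyMeasurable
          fun p : (Fin n → ℝ) × (Fin n → ℝ) => reachAvoidValue κ Xs Xr k p.2 :=
        (ih.comp measurable_snd).stronglyMeasurable
      exact h2.integral_kernel_prod_right'
    exact Measurable.ite hXr measurable_const (Measurable.ite hXs h1.measurable measurable_const)

lemma reachAvoidValue_bounds {n : ℕ}
    (κ : Kernel (Fin n → ℝ) (Fin n → ℝ)) [IsMarkovKernel κ]
    (Xs Xr : Set (Fin n → ℝ)) (hXs : MeasurableSet Xs) (hXr : MeasurableSet Xr) :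
    ∀ k, ∀ x, 0 ≤ reachAvoidValue κ Xs Xr k x ∧ reachAvoidValue κ Xs Xr k x ≤ 1 := by
  intro k
  induction k with
  | zero =>
    intro x
    by_cases hx : x ∈ Xr <;> simp [reachAvoidValue, hx]
  | succ k ih =>
    intro x
    by_cases hxr : x ∈ Xr
    · simp [reachAvoidValue, hxr]
    by_cases hxs : x ∈ Xs
    · have hm := reachAvoidValue_measurable κ Xs Xr hXs hXr k
      have hintg : Integrable (reachAvoidValue κ Xs Xr k) (κ x) := by
        refine Integrable.mono' (integrable_const 1) hm.aestronglyMeasurable ?_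
        filter_upwards with y
        rw [Real.norm_eq_abs, abs_le]
        exact ⟨by linarith [(ih y).1], (ih y).2⟩
      constructor
      · simp only [reachAvoidValue, hxr, if_false, hxs, if_true]
        exact integral_nonneg fun y => (ih y).1
      · simp only [reachAvoidValue, hxr, if_false, hxs, if_true]
        calc ∫ y, reachAvoidValue κ Xs Xr k y ∂(κ x)
            ≤ ∫ _, (1 : ℝ) ∂(κ x) :=
              integral_mono hintg (integrable_const 1) fun y => (ih y).2
          _ = 1 := by simp
    · simp [reachAvoidValue, hxr, hxs]

lemma reachAvoidValue_integrable {n : ℕ}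
    (κ : Kernel (Fin n → ℝ) (Fin n → ℝ)) [IsMarkovKernel κ]
    (Xs Xr : Set (Fin n → ℝ)) (hXs : MeasurableSet Xs) (hXr : MeasurableSet Xr)
    (k : ℕ) (x : Fin n → ℝ) :
    Integrable (reachAvoidValue κ Xs Xr k) (κ x) := by
  refine Integrable.mono' (integrable_const 1)
    (reachAvoidValue_measurable κ Xs Xr hXs hXr k).aestronglyMeasurable ?_
  filter_upwards with y
  have h := reachAvoidValue_bounds κ Xs Xr hXs hXr k y
  rw [Real.norm_eq_abs, abs_le]
  exact ⟨by linarith [h.1], h.2⟩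

lemma reachAvoid_lower {n : ℕ}
    (κ : Kernel (Fin n → ℝ) (Fin n → ℝ)) [IsMarkovKernel κ]
    (Xs Xr : Set (Fin n → ℝ)) (hXs : MeasurableSet Xs) (hXr : MeasurableSet Xr)
    (H : ℕ) (α β : ℕ → ℝ) (hβ : ∀ i, 1 ≤ i → i ≤ H → 0 ≤ β i)
    (R : ℕ → (Fin n → ℝ) → ℝ)
    (hint : ∀ i, 1 ≤ i → i ≤ H → ∀ x, Integrable (R (i - 1)) (κ x))
    (hb : ∀ x ∈ Xr, ∀ i ≤ H, R i x ≤ 1 + α i)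
    (hc : ∀ x, x ∉ Xs → ∀ i ≤ H, R i x ≤ α i)
    (hd : ∀ x ∈ Xs \ Xr, R 0 x ≤ α 0)
    (he : ∀ x ∈ Xs \ Xr, ∀ i, 1 ≤ i → i ≤ H →
       R i x ≤ (∫ y, R (i - 1) y ∂(κ x)) - α (i - 1) + α i + β i) :
    ∀ i ≤ H, ∀ x,
      R i x - (α i + ∑ k ∈ Finset.Icc 1 i, β k) ≤ reachAvoidValue κ Xs Xr i x := by
  intro i
  induction i with
  | zero =>
    intro h0 x
    simp only [Finset.Icc_eq_empty_of_lt (by norm_num : (1:ℕ) > 0), Finset.sum_empty, add_zero]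
    by_cases hxr : x ∈ Xr
    · simp only [reachAvoidValue, hxr, if_true]
      linarith [hb x hxr 0 h0]
    by_cases hxs : x ∈ Xs
    · simp only [reachAvoidValue, hxr, if_false]
      linarith [hd x ⟨hxs, hxr⟩]
    · simp only [reachAvoidValue, hxr, if_false]
      linarith [hc x hxs 0 h0]
  | succ i ih =>
    intro hle x
    have hile : i ≤ H := Nat.le_of_succ_le hle
    have hsumβ : 0 ≤ ∑ k ∈ Finset.Icc 1 (i + 1), β k :=
      Finset.sum_nonneg fun k hk =>
        hβ k (Finset.mem_Icc.mp hk).1 (le_trans (Finset.mem_Icc.mp hk).2 hle)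
    have hsplit : ∑ k ∈ Finset.Icc 1 (i + 1), β k
        = (∑ k ∈ Finset.Icc 1 i, β k) + β (i + 1) :=
      Finset.sum_Icc_succ_top (Nat.succ_le_succ (Nat.zero_le i)) β
    by_cases hxr : x ∈ Xr
    · simp only [reachAvoidValue, hxr, if_true]
      linarith [hb x hxr (i + 1) hle]
    by_cases hxs : x ∈ Xs
    · have hintR : Integrable (R i) (κ x) := by
        have := hint (i + 1) (Nat.succ_le_succ (Nat.zero_le i)) hle x
        simpa using this
      have hVint := reachAvoidValue_integrable κ Xs Xr hXs hXr i x
      have hmono : ∫ y, (R i y - (α i + ∑ k ∈ Finset.Icc 1 i, β k)) ∂(κ x)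
          ≤ ∫ y, reachAvoidValue κ Xs Xr i y ∂(κ x) :=
        integral_mono (hintR.sub (integrable_const _)) hVint fun y => ih hile y
      rw [integral_sub hintR (integrable_const _), integral_const] at hmono
      simp only [Measure.real, measure_univ, ENNReal.toReal_one, smul_eq_mul, one_mul] at hmono
      have hee := he x ⟨hxs, hxr⟩ (i + 1) (Nat.succ_le_succ (Nat.zero_le i)) hle
      simp only [Nat.add_sub_cancel] at hee
      simp only [reachAvoidValue, hxr, if_false, hxs, if_true]
      linarith
    · simp only [reachAvoidValue, hxr, if_false, hxs, if_false]
      linarith [hc x hxs (i + 1) hle]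

/-- Time-varying reach-avoid SOS certificate: if the polynomials
`R_0, …, R_H` together with SOS multipliers satisfy the SOS conditions (i)–(vi), then
`R(x,i) := R_i(x)` satisfies the time-varying certificate conditions (a)–(f) and
consequently `V_H(x) ≥ γ − (α_H + Σ_{i=1}^H β_i)` for every `x ∈ X₀`. -/
theorem timeVarying_sos_certificate
    {n : ℕ} (κ : Kernel (Fin n → ℝ) (Fin n → ℝ)) [IsMarkovKernel κ]
    {lr lu ls l0 : ℕ}
    (hr : Fin lr → MvPolynomial (Fin n) ℝ) (hu : Fin lu → MvPolynomial (Fin n) ℝ)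
    (hsb : Fin ls → MvPolynomial (Fin n) ℝ) (h0 : Fin l0 → MvPolynomial (Fin n) ℝ)
    (Xr Xu Xs X0 : Set (Fin n → ℝ))
    (hXrdef : Xr = {x : Fin n → ℝ | ∀ j, 0 ≤ MvPolynomial.eval x (hr j)})
    (hXudef : Xu = {x : Fin n → ℝ | ∀ j, 0 ≤ MvPolynomial.eval x (hu j)})
    (hXsdef : Xs = Xuᶜ)
    (hXsbdef : Xs \ Xr = {x : Fin n → ℝ | ∀ j, 0 ≤ MvPolynomial.eval x (hsb j)})
    (hX0def : X0 = {x : Fin n → ℝ | ∀ j, 0 ≤ MvPolynomial.eval x (h0 j)})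
    (hXrXs : Xr ⊆ Xs) (hX0Xs : X0 ⊆ Xs)
    (H : ℕ) (γ : ℝ) (α β : ℕ → ℝ)
    (hγ : 0 ≤ γ) (hα : ∀ i ≤ H, 0 ≤ α i) (hβ : ∀ i, 1 ≤ i → i ≤ H → 0 ≤ β i)
    (Rp ER : ℕ → MvPolynomial (Fin n) ℝ)
    (hERint : ∀ i, 1 ≤ i → i ≤ H → ∀ x : Fin n → ℝ,
      Integrable (fun y => MvPolynomial.eval y (Rp (i - 1))) (κ x))
    (hERdef : ∀ i, 1 ≤ i → i ≤ H → ∀ x : Fin n → ℝ,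
      MvPolynomial.eval x (ER i) = ∫ y, MvPolynomial.eval y (Rp (i - 1)) ∂(κ x))
    (Lr : ℕ → Fin lr → MvPolynomial (Fin n) ℝ)
    (Lu : ℕ → Fin lu → MvPolynomial (Fin n) ℝ)
    (Ls : ℕ → Fin ls → MvPolynomial (Fin n) ℝ)
    (L0 : Fin l0 → MvPolynomial (Fin n) ℝ)
    (hLr : ∀ i ≤ H, ∀ j, IsSOS (Lr i j))
    (hLu : ∀ i ≤ H, ∀ j, IsSOS (Lu i j))
    (hLs : ∀ i ≤ H, ∀ j, IsSOS (Ls i j))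
    (hL0 : ∀ j, IsSOS (L0 j))
    (hi : ∀ i ≤ H, IsSOS (Rp i))
    (hii : ∀ i ≤ H,
      IsSOS (-(Rp i) + MvPolynomial.C (1 + α i) - ∑ j, Lr i j * hr j))
    (hiii : ∀ i ≤ H,
      IsSOS (-(Rp i) + MvPolynomial.C (α i) - ∑ j, Lu i j * hu j))
    (hiv : IsSOS (-(Rp 0) + MvPolynomial.C (α 0) - ∑ j, Ls 0 j * hsb j))
    (hv : ∀ i, 1 ≤ i → i ≤ H →
      IsSOS (-(Rp i) + ER i + MvPolynomial.C (-α (i - 1) + α i + β i)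
        - ∑ j, Ls i j * hsb j))
    (hvi : IsSOS (Rp H - MvPolynomial.C γ - ∑ j, L0 j * h0 j)) :
    ((∀ x : Fin n → ℝ, ∀ i ≤ H, 0 ≤ MvPolynomial.eval x (Rp i)) ∧
     (∀ x ∈ Xr, ∀ i ≤ H, MvPolynomial.eval x (Rp i) ≤ 1 + α i) ∧
     (∀ x ∈ Xu, ∀ i ≤ H, MvPolynomial.eval x (Rp i) ≤ α i) ∧
     (∀ x ∈ Xs \ Xr, MvPolynomial.eval x (Rp 0) ≤ α 0) ∧
     (∀ x ∈ Xs \ Xr, ∀ i, 1 ≤ i → i ≤ H →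
        MvPolynomial.eval x (Rp i) ≤
          (∫ y, MvPolynomial.eval y (Rp (i - 1)) ∂(κ x)) - α (i - 1) + α i + β i) ∧
     (∀ x ∈ X0, γ ≤ MvPolynomial.eval x (Rp H))) ∧
    (∀ x ∈ X0,
      γ - (α H + ∑ i ∈ Finset.Icc 1 H, β i) ≤ reachAvoidValue κ Xs Xr H x) := by
  -- condition (a)
  have ha : ∀ x : Fin n → ℝ, ∀ i ≤ H, 0 ≤ MvPolynomial.eval x (Rp i) :=
    fun x i hiH => isSOS_eval_nonneg (hi i hiH) x
  -- condition (b)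
  have hbcond : ∀ x ∈ Xr, ∀ i ≤ H, MvPolynomial.eval x (Rp i) ≤ 1 + α i := by
    intro x hx i hiH
    have hx' : ∀ j, 0 ≤ MvPolynomial.eval x (hr j) := by rw [hXrdef] at hx; exact hx
    have h1 := isSOS_eval_nonneg (hii i hiH) x
    have h2 : 0 ≤ MvPolynomial.eval x (∑ j, Lr i j * hr j) := by
      rw [map_sum]
      exact Finset.sum_nonneg fun j _ => by
        rw [map_mul]; exact mul_nonneg (isSOS_eval_nonneg (hLr i hiH j) x) (hx' j)
    simp only [map_sub, map_add, map_neg, MvPolynomial.eval_C] at h1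
    linarith
  -- condition (c)
  have hccond : ∀ x ∈ Xu, ∀ i ≤ H, MvPolynomial.eval x (Rp i) ≤ α i := by
    intro x hx i hiH
    have hx' : ∀ j, 0 ≤ MvPolynomial.eval x (hu j) := by rw [hXudef] at hx; exact hx
    have h1 := isSOS_eval_nonneg (hiii i hiH) x
    have h2 : 0 ≤ MvPolynomial.eval x (∑ j, Lu i j * hu j) := by
      rw [map_sum]
      exact Finset.sum_nonneg fun j _ => by
        rw [map_mul]; exact mul_nonneg (isSOS_eval_nonneg (hLu i hiH j) x) (hx' j)
    simp only [map_sub, map_add, map_neg, MvPolynomial.eval_C] at h1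
    linarith
  -- condition (d)
  have hdcond : ∀ x ∈ Xs \ Xr, MvPolynomial.eval x (Rp 0) ≤ α 0 := by
    intro x hx
    have hx' : ∀ j, 0 ≤ MvPolynomial.eval x (hsb j) := by rw [hXsbdef] at hx; exact hx
    have h1 := isSOS_eval_nonneg hiv x
    have h2 : 0 ≤ MvPolynomial.eval x (∑ j, Ls 0 j * hsb j) := by
      rw [map_sum]
      exact Finset.sum_nonneg fun j _ => by
        rw [map_mul]; exact mul_nonneg (isSOS_eval_nonneg (hLs 0 (Nat.zero_le H) j) x) (hx' j)
    simp only [map_sub, map_add, map_neg, MvPolynomial.eval_C] at h1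
    linarith
  -- condition (e)
  have hecond : ∀ x ∈ Xs \ Xr, ∀ i, 1 ≤ i → i ≤ H →
      MvPolynomial.eval x (Rp i) ≤
        (∫ y, MvPolynomial.eval y (Rp (i - 1)) ∂(κ x)) - α (i - 1) + α i + β i := by
    intro x hx i h1i hiH
    have hx' : ∀ j, 0 ≤ MvPolynomial.eval x (hsb j) := by rw [hXsbdef] at hx; exact hx
    have h1 := isSOS_eval_nonneg (hv i h1i hiH) x
    have h2 : 0 ≤ MvPolynomial.eval x (∑ j, Ls i j * hsb j) := by
      rw [map_sum]
      exact Finset.sum_nonneg fun j _ => by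
        rw [map_mul]; exact mul_nonneg (isSOS_eval_nonneg (hLs i hiH j) x) (hx' j)
    simp only [map_sub, map_add, map_neg, MvPolynomial.eval_C] at h1
    rw [hERdef i h1i hiH x] at h1
    linarith
  -- condition (f)
  have hfcond : ∀ x ∈ X0, γ ≤ MvPolynomial.eval x (Rp H) := by
    intro x hx
    have hx' : ∀ j, 0 ≤ MvPolynomial.eval x (h0 j) := by rw [hX0def] at hx; exact hx
    have h1 := isSOS_eval_nonneg hvi x
    have h2 : 0 ≤ MvPolynomial.eval x (∑ j, L0 j * h0 j) := by
      rw [map_sum]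
      exact Finset.sum_nonneg fun j _ => by
        rw [map_mul]; exact mul_nonneg (isSOS_eval_nonneg (hL0 j) x) (hx' j)
    simp only [map_sub, MvPolynomial.eval_C] at h1
    linarith
  -- measurability of the sets
  have hmeas : ∀ {m : ℕ} (q : Fin m → MvPolynomial (Fin n) ℝ),
      MeasurableSet {x : Fin n → ℝ | ∀ j, 0 ≤ MvPolynomial.eval x (q j)} := by
    intro m q
    have : {x : Fin n → ℝ | ∀ j, 0 ≤ MvPolynomial.eval x (q j)}
        = ⋂ j, {x : Fin n → ℝ | 0 ≤ MvPolynomial.eval x (q j)} := by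
      ext x; simp [Set.mem_iInter]
    rw [this]
    exact MeasurableSet.iInter fun j =>
      measurableSet_le measurable_const (MvPolynomial.continuous_eval (q j)).measurable
  have hXrm : MeasurableSet Xr := hXrdef ▸ hmeas hr
  have hXum : MeasurableSet Xu := hXudef ▸ hmeas hu
  have hXsm : MeasurableSet Xs := hXsdef ▸ hXum.compl
  refine ⟨⟨ha, hbcond, hccond, hdcond, hecond, hfcond⟩, ?_⟩
  intro x hx
  have hkey := reachAvoid_lower κ Xs Xr hXsm hXrm H α β hβ
      (fun i y => MvPolynomial.eval y (Rp i))
      (fun i h1 h2 y => hERint i h1 h2 y)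
      hbcond
      (fun y hy i hiH => hccond y (by
        rw [hXsdef] at hy
        simpa using hy) i hiH)
      hdcond hecond H le_rfl x
  linarith [hfcond x hx]
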